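/- Let $\mathcal{C}$ be an abelian category with enough injectives and $X$ an exact, locally nilpotent endofunctor preserving injectives. If $\mathsf{M} \in \operatorname{Mono}(X)$ and the underlying object $M = f^*(\mathsf{M})$ is injective in $\mathcal{C}$, then $\mathsf{M} \cong f_!(J)$ for some injective object $J$ of $\mathcal{C}$. -/

import Mathlib

open CategoryTheory Limits

universe v u

variable {C : Type u} [Category.{v} C]

/-- The power `X^n` of an endofunctor, with `X^(n+1) = X^n ⋙ X`. -/
def fpow (X : C ⥤ C) : ℕ → (C ⥤ C)
  | 0 => 𝟭 C
  | n + 1 => fpow X n ⋙ X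

/-- `X` is locally nilpotent if every object is annihilated by some power of `X`. -/
def LocallyNilpotent (X : C ⥤ C) : Prop :=
  ∀ M : C, ∃ n : ℕ, IsZero ((fpow X n).obj M)

/-- The category `(X ⇓ Id)` of `X`-modules, identified with the Eilenberg–Moore category
of the free monad on `X`. -/
structure XMod (X : C ⥤ C) : Type max u v where
  carrier : C
  str : X.obj carrier ⟶ carrier

/-- Morphisms of `X`-modules. -/
@[ext]
structure XModHom {X : C ⥤ C} (M N : XMod X) : Type v where
  hom : M.carrier ⟶ N.carrier
  comm : M.str ≫ hom = X.map hom ≫ N.str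

instance (X : C ⥤ C) : Category (XMod X) where
  Hom := XModHom
  id M := ⟨𝟙 M.carrier, by simp⟩
  comp f g := ⟨f.hom ≫ g.hom, by
    rw [← Category.assoc, f.comm, Category.assoc, g.comm, ← Category.assoc, ← Functor.map_comp]⟩
  id_comp f := by apply XModHom.ext; simp [CategoryStruct.id, CategoryStruct.comp]
  comp_id f := by apply XModHom.ext; simp [CategoryStruct.id, CategoryStruct.comp]
  assoc f g h := by apply XModHom.ext; simp [CategoryStruct.comp]

@[simp] lemma XMod.id_hom {X : C ⥤ C} (M : XMod X) : (𝟙 M : XModHom M M).hom = 𝟙 M.carrier := rfl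
@[simp] lemma XMod.comp_hom {X : C ⥤ C} {M N P : XMod X} (f : M ⟶ N) (g : N ⟶ P) :
    (f ≫ g).hom = f.hom ≫ g.hom := rfl

/-- `F` is the free `X`-module `f₁(N)` on `N`, encoded via the universal
property of the free–forgetful adjunction `f₁ ⊣ f⋆`. -/
structure IsFreeXModOn (X : C ⥤ C) (F : XMod X) (N : C) where
  unit : N ⟶ F.carrier
  lift : ∀ (P : XMod X), (N ⟶ P.carrier) → (F ⟶ P)
  fac : ∀ (P : XMod X) (g : N ⟶ P.carrier), unit ≫ (lift P g).hom = g
  uniq : ∀ (P : XMod X) (g : N ⟶ P.carrier) (k : F ⟶ P), unit ≫ k.hom = g → k = lift P g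

/-!
Since `X M` is injective, the monic structure map `h : X M ⟶ M` splits, so `M ≅ X M ⊞ J` with
`J = coker h`, and `J` is injective as a retract of `M`. With `r` the retraction of `h` and
`q : M ⟶ J` the projection, a map `k : M ⟶ P` into an `X`-module `(P, p)` is a module map
restricting to `g` on `J` iff `k = r ≫ X k ≫ p + q ≫ g`. The additive operator
`k ↦ r ≫ X k ≫ p` factors its `n`-th power through `Xⁿ M`, so it is nilpotent by local
nilpotency of `X`; hence this affine equation has exactly one solution.
-/

theorem AddMonoid.End.existsUnique_eq_add_of_isNilpotent {A : Type*} [AddCommGroup A]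
    {L : AddMonoid.End A} (hL : IsNilpotent L) (c : A) : ∃! x, x = L x + c := by
  obtain ⟨u, hu⟩ := hL.isUnit_one_sub
  have key : ∀ x, x = L x + c ↔ (u : AddMonoid.End A) x = c := by
    intro x
    rw [hu, ← sub_eq_iff_eq_add']
    rfl
  refine ⟨(↑u⁻¹ : AddMonoid.End A) c, (key _).2 (DFunLike.congr_fun u.mul_inv c),
    fun x hx => ?_⟩
  rw [← (key x).1 hx]
  exact (DFunLike.congr_fun u.inv_mul x).symm

lemma CategoryTheory.Injective.isSplitMono_of_mono {A B : C} [Injective A] (f : A ⟶ B) [Mono f] :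
    IsSplitMono f :=
  ⟨⟨⟨Injective.factorThru (𝟙 A) f, Injective.comp_factorThru _ _⟩⟩⟩

noncomputable def IsFreeXModOn.ofExistsUnique {X : C ⥤ C} {M : XMod X} {J : C}
    (ι : J ⟶ M.carrier)
    (h : ∀ (P : XMod X) (g : J ⟶ P.carrier), ∃! k : M ⟶ P, ι ≫ k.hom = g) :
    IsFreeXModOn X M J where
  unit := ι
  lift P g := (h P g).exists.choose
  fac P g := (h P g).exists.choose_spec
  uniq P g _ hk := (h P g).unique hk (h P g).exists.choose_spec

section Preadditive

variable [Preadditive C] {X : C ⥤ C} [X.Additive]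

def sandwichEnd {A B : C} (r : A ⟶ X.obj A) (p : X.obj B ⟶ B) : AddMonoid.End (A ⟶ B) where
  toFun k := r ≫ X.map k ≫ p
  map_zero' := by simp
  map_add' k k' := by simp

lemma sandwichEnd_apply {A B : C} (r : A ⟶ X.obj A) (p : X.obj B ⟶ B) (k : A ⟶ B) :
    sandwichEnd r p k = r ≫ X.map k ≫ p := rfl

lemma sandwichEnd_pow_apply_factors {A B : C} (r : A ⟶ X.obj A) (p : X.obj B ⟶ B) (n : ℕ)
    (k : A ⟶ B) : ∃ (s : A ⟶ (fpow X n).obj A) (t : (fpow X n).obj B ⟶ B),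
      (sandwichEnd r p ^ n) k = s ≫ (fpow X n).map k ≫ t := by
  induction n with
  | zero => exact ⟨𝟙 A, 𝟙 B, by simp [fpow]⟩
  | succ n ih =>
    obtain ⟨s, t, h⟩ := ih
    refine ⟨r ≫ X.map s, X.map t ≫ p, ?_⟩
    rw [pow_succ']
    change sandwichEnd r p ((sandwichEnd r p ^ n) k) = _
    rw [h, sandwichEnd_apply]
    simp [fpow]

lemma isNilpotent_sandwichEnd {A B : C} (r : A ⟶ X.obj A) (p : X.obj B ⟶ B)
    (hA : ∃ n, IsZero ((fpow X n).obj A)) : IsNilpotent (sandwichEnd r p) := by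
  obtain ⟨n, hn⟩ := hA
  refine ⟨n, AddMonoidHom.ext fun k => ?_⟩
  obtain ⟨s, t, h⟩ := sandwichEnd_pow_apply_factors r p n k
  refine h.trans ?_
  rw [hn.eq_of_src ((fpow X n).map k) 0, zero_comp, comp_zero]
  rfl

section Decomposition

variable {M P : XMod X} {J : C} {r : M.carrier ⟶ X.obj M.carrier} {ι : J ⟶ M.carrier}
  {q : M.carrier ⟶ J}

lemma XMod.comm_and_fac_iff_eq_sandwichEnd_add (hr : M.str ≫ r = 𝟙 _) (hq : M.str ≫ q = 0)
    (hιr : ι ≫ r = 0) (hιq : ι ≫ q = 𝟙 J) (htot : r ≫ M.str + q ≫ ι = 𝟙 _)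
    (g : J ⟶ P.carrier) (k : M.carrier ⟶ P.carrier) :
    (M.str ≫ k = X.map k ≫ P.str ∧ ι ≫ k = g) ↔ k = sandwichEnd r P.str k + q ≫ g := by
  rw [sandwichEnd_apply]
  constructor
  · rintro ⟨hcomm, hfac⟩
    conv_lhs => rw [← Category.id_comp k, ← htot]
    rw [Preadditive.add_comp, Category.assoc, Category.assoc, hcomm, hfac]
  · intro hk
    constructor
    · conv_lhs => rw [hk]
      simp [reassoc_of% hr, reassoc_of% hq]
    · conv_lhs => rw [hk]
      simp [reassoc_of% hιr, reassoc_of% hιq]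

lemma XMod.existsUnique_hom_comp_eq (hr : M.str ≫ r = 𝟙 _) (hq : M.str ≫ q = 0)
    (hιr : ι ≫ r = 0) (hιq : ι ≫ q = 𝟙 J) (htot : r ≫ M.str + q ≫ ι = 𝟙 _)
    (hM : ∃ n, IsZero ((fpow X n).obj M.carrier)) (P : XMod X) (g : J ⟶ P.carrier) :
    ∃! k : M ⟶ P, ι ≫ k.hom = g := by
  have key := comm_and_fac_iff_eq_sandwichEnd_add (P := P) hr hq hιr hιq htot g
  obtain ⟨k, hk, huniq⟩ :=
    AddMonoid.End.existsUnique_eq_add_of_isNilpotent (isNilpotent_sandwichEnd r P.str hM) (q ≫ g)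
  obtain ⟨hcomm, hfac⟩ := (key k).2 hk
  exact ⟨⟨k, hcomm⟩, hfac,
    fun k' hk' => XModHom.ext (huniq _ ((key _).1 ⟨k'.comm, hk'⟩))⟩

end Decomposition

noncomputable def IsFreeXModOn.ofIsSplitMono (M : XMod X) [IsSplitMono M.str]
    [HasCokernel M.str] (hM : ∃ n, IsZero ((fpow X n).obj M.carrier)) :
    IsFreeXModOn X M (cokernel M.str) :=
  let b := binaryBiconeOfIsSplitMonoOfCokernel (cokernelIsCokernel M.str)
  ofExistsUnique b.inr <| XMod.existsUnique_hom_comp_eq b.inl_fst b.inl_snd b.inr_fst b.inr_snd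
    (IsBilimit.binary_total (isBilimitBinaryBiconeOfIsSplitMonoOfCokernel _)) hM

lemma injective_cokernel_of_isSplitMono {A B : C} [Injective B] (f : A ⟶ B) [IsSplitMono f]
    [HasCokernel f] : Injective (cokernel f) :=
  let b := binaryBiconeOfIsSplitMonoOfCokernel (cokernelIsCokernel f)
  Retract.injective (Y := B) ⟨b.inr, b.snd, b.inr_snd⟩

end Preadditive

theorem monoX_with_injective_underlying_is_free
    [Abelian C] {X : C ⥤ C}
    [PreservesFiniteLimits X]
    (hX : LocallyNilpotent X)
    (hXinj : ∀ I : C, Injective I → Injective (X.obj I))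
    (M : XMod X) (hM : Mono M.str) (hMinj : Injective M.carrier) :
    ∃ J : C, Injective J ∧ Nonempty (IsFreeXModOn X M J) := by
  have : X.Additive := X.additive_of_preserves_binary_products
  have : Injective (X.obj M.carrier) := hXinj _ hMinj
  have : IsSplitMono M.str := Injective.isSplitMono_of_mono M.str
  exact ⟨cokernel M.str, injective_cokernel_of_isSplitMono M.str,
    ⟨.ofIsSplitMono M (hX M.carrier)⟩⟩
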